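/- arXiv:1310.8537 — 5 statements merged into one kernel-verified Lean document; each statement's English description precedes it below -/
import Mathlib

section
/- Let e, w, h, t be real numbers and λ a complex number satisfying λ² = e·λ + w·h. Define the 4×4 complex matrix T with rows (e,0,w,t), (0,e,0,h), (h,−t,0,0), (0,w,0,0). Then the row vector v = (λ, iλ, w, t+ih) satisfies v·T = λ·v. -/
open Complex

theorem stmt_1 (e w h t : ℝ) (lam : ℂ) (hlam : lam ^ 2 = e * lam + w * h)
    (T : Matrix (Fin 4) (Fin 4) ℂ)
    (hT : T = !![(e : ℂ), 0, w, t; 0, e, 0, h; h, -t, 0, 0; 0, w, 0, 0])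
    (v : Fin 4 → ℂ) (hv : v = ![lam, I * lam, (w : ℂ), (t : ℂ) + I * h]) :
    Matrix.vecMul v T = lam • v := by
  subst hT hv
  funext j
  fin_cases j <;>
      simp [Matrix.vecMul, dotProduct, Fin.sum_univ_four, Matrix.vecHead, Matrix.vecTail]
  · linear_combination -hlam
  · linear_combination -I * hlam
  · ring
end

section
/- Let e, w, h, t be real numbers and λ a complex number with λ² = e·λ + w·h. Define the 4×4 complex matrix T̃ with rows (2e,0,4w,4t), (0,2e,0,2h), (h,−2t,0,0), (0,2w,0,0). Then the row vector v = (λ, 2iλ, 2w, 2t+2ih) satisfies v·T̃ = 2λ·v. -/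
open Complex

theorem stmt_2 (e w h t : ℝ) (lam : ℂ) (hlam : lam ^ 2 = e * lam + w * h)
    (T : Matrix (Fin 4) (Fin 4) ℂ)
    (hT : T = !![(2 * e : ℂ), 0, 4 * w, 4 * t; 0, 2 * e, 0, 2 * h;
                 (h : ℂ), -(2 * t), 0, 0; 0, 2 * w, 0, 0])
    (v : Fin 4 → ℂ)
    (hv : v = ![lam, 2 * I * lam, (2 * w : ℂ), (2 * t : ℂ) + 2 * I * h]) :
    Matrix.vecMul v T = (2 * lam) • v := by
  subst hT hv
  funext i
  fin_cases i
  · simp [Matrix.vecMul, dotProduct, Fin.sum_univ_four, Matrix.vecHead, Matrix.vecTail]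
    linear_combination (-2 : ℂ) * hlam
  · simp [Matrix.vecMul, dotProduct, Fin.sum_univ_four, Matrix.vecHead, Matrix.vecTail]
    linear_combination (-4 * I : ℂ) * hlam
  · simp [Matrix.vecMul, dotProduct, Fin.sum_univ_four, Matrix.vecHead, Matrix.vecTail]
    ring
  · simp [Matrix.vecMul, dotProduct, Fin.sum_univ_four, Matrix.vecHead, Matrix.vecTail]
    ring
end

section
/- Let a, b, c, d, e be elements of a commutative ring. Define the 4×4 matrix T' with rows (e,0,2a,2b), (0,e,c,d), (d,−2b,0,0), (−c,2a,0,0). Then T'² = e·T' + 2(ad − bc)·I₄. -/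
theorem stmt_3 {R : Type*} [CommRing R] (a b c d e : R)
    (T' : Matrix (Fin 4) (Fin 4) R)
    (hT' : T' = !![e, 0, 2 * a, 2 * b; 0, e, c, d; d, -(2 * b), 0, 0; -c, 2 * a, 0, 0]) :
    T' ^ 2 = e • T' + (2 * (a * d - b * c)) • 1 := by
  subst hT'
  rw [pow_two]
  ext i j
  fin_cases i <;> fin_cases j <;>
    simp [Matrix.mul_apply, Fin.sum_univ_four, Matrix.one_apply, Matrix.vecHead, Matrix.vecTail] <;> ring
end

section
/- Let λ be an irrational real number, e an integer and w, h positive integers with λ² = eλ + 2wh. Let β, β' be positive rationals and R, R' rationals. Then R'λ² + (R'β + 2β')λ + 2ββ' = Rλ² + (Rβ' + β)λ + ββ' holds if and only if both R(e+β') − R'(e+β) = 2β' − β and R − R' = ββ'/(2wh). -/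
theorem stmt_16 (lam : ℝ) (hirr : Irrational lam) (e w h : ℤ)
    (hw : 0 < w) (hh : 0 < h) (hlam : lam ^ 2 = e * lam + 2 * w * h)
    (beta beta' : ℚ) (hbeta : 0 < beta) (hbeta' : 0 < beta') (R R' : ℚ) :
    (R' * lam ^ 2 + (R' * beta + 2 * beta') * lam + 2 * beta * beta'
      = R * lam ^ 2 + (R * beta' + beta) * lam + beta * beta')
    ↔ (R * (e + beta') - R' * (e + beta) = 2 * beta' - beta
        ∧ R - R' = beta * beta' / (2 * w * h)) := by
  have key : ∀ p q : ℚ, ((p : ℝ) * lam + q = 0) ↔ (p = 0 ∧ q = 0) := by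
    intro p q
    constructor
    · intro hpq
      by_cases hp : p = 0
      · subst hp
        simp at hpq
        exact ⟨rfl, by exact_mod_cast hpq⟩
      · exfalso
        have : lam = ((-q / p : ℚ) : ℝ) := by
          push_cast
          field_simp
          linarith [hpq]
        exact hirr ⟨-q / p, this.symm⟩
    · rintro ⟨hp, hq⟩
      simp [hp, hq]
  set P : ℚ := R * ((e : ℚ) + beta') - R' * ((e : ℚ) + beta) - (2 * beta' - beta) with hP
  set Q : ℚ := (R - R') * (2 * (w : ℚ) * (h : ℚ)) - beta * beta' with hQ
  have hsub : (R * lam ^ 2 + (R * beta' + beta) * lam + beta * beta')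
      - (R' * lam ^ 2 + (R' * beta + 2 * beta') * lam + 2 * beta * beta')
      = (P : ℝ) * lam + (Q : ℝ) := by
    rw [hP, hQ]
    push_cast
    linear_combination ((R : ℝ) - R') * hlam
  have hwh : (2 * (w : ℚ) * (h : ℚ)) ≠ 0 := by
    have : (0 : ℚ) < 2 * (w : ℚ) * (h : ℚ) := by positivity
    exact ne_of_gt this
  constructor
  · intro heq
    have h0 : (P : ℝ) * lam + (Q : ℝ) = 0 := by rw [← hsub, heq]; ring
    obtain ⟨hp0, hq0⟩ := (key P Q).mp h0
    refine ⟨by linarith [sub_eq_zero.mp (by linarith [hp0] : P - 0 = 0)] , ?_⟩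
    · have : (R - R') * (2 * (w : ℚ) * (h : ℚ)) = beta * beta' := by
        have := hq0; rw [hQ] at this; linarith
      rw [eq_div_iff (by push_cast at hwh ⊢; exact hwh)]
      push_cast
      linarith [this]
  · rintro ⟨h1, h2⟩
    have hp0 : P = 0 := by rw [hP]; linarith
    have hq0 : Q = 0 := by
      rw [hQ]
      have : (R - R') * (2 * (w : ℚ) * (h : ℚ)) = beta * beta' := by
        rw [h2]; field_simp
      linarith
    have h0 : (P : ℝ) * lam + (Q : ℝ) = 0 := (key P Q).mpr ⟨hp0, hq0⟩
    have := hsub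
    rw [h0] at this
    linarith [this]
end

section
/- Let w₁, w₂, w₃, h₁, h₂, h₃ be positive real numbers, and suppose there exist rationals (r₁, r₂, r₃) ≠ (0,0,0) with r₁h₁/w₁ + r₂h₂/w₂ + r₃h₃/w₃ = 0, such that every rational triple (q₁,q₂,q₃) with q₁h₁/w₁ + q₂h₂/w₂ + q₃h₃/w₃ = 0 is a rational multiple of (r₁,r₂,r₃). Then the closure of the image of the line {s·(h₁,h₂,h₃) : s ∈ ℝ} in the torus (ℝ/w₁ℤ) × (ℝ/w₂ℤ) × (ℝ/w₃ℤ) equals the image in this torus of the plane {(x₁,x₂,x₃) ∈ ℝ³ : r₁x₁/w₁ + r₂x₂/w₂ + r₃x₃/w₃ = 0}. -/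
/-!
Write `μᵢ = hᵢ / wᵢ`. When `r₁ ≠ 0` (the other cases follow by permuting the coordinates
cyclically), solving the relation for `x₁` parametrises the plane by `(x₂, x₃) ∈ ℝ²`. The orbit
closure pulls back to a closed subgroup `K` of `ℝ²`. It contains the line through `(h₂, h₃)`,
and the points `(n w₂, 0)`, `(0, m w₃)` lying over lattice points, for suitable integers
`n, m ≠ 0`. Sliding `(0, m w₃)` along the line onto the first axis gives a point whose ratio to
`(n w₂, 0)` is a rational multiple of `μ₂ / μ₃`. This ratio is irrational, because
`(0, 1, -μ₂ / μ₃)` is not proportional to `r`. So `K` contains the whole first axis, and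
therefore all of `ℝ²`.

Conversely, the image of the plane is closed. Its preimage in `ℝ³` is the preimage, under the
linear form `x ↦ ∑ rᵢ xᵢ / wᵢ`, of `ℤ r₁ + ℤ r₂ + ℤ r₃`, a discrete subgroup of `ℝ`.
-/

open Set

lemma AddSubgroup.eq_top_of_isClosed_of_irrational_div {T : AddSubgroup ℝ}
    (hT : IsClosed (T : Set ℝ)) {a b : ℝ} (ha : a ∈ T) (hb : b ∈ T) (hab : Irrational (a / b)) :
    T = ⊤ := by
  have hdense : Dense (T : Set ℝ) := (dense_addSubgroupClosure_pair_iff.mpr hab).mono <|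
    (AddSubgroup.closure_le T).mpr (pair_subset ha hb)
  exact SetLike.coe_injective (by rw [← hT.closure_eq, hdense.closure_eq]; rfl)

lemma AddSubgroup.eq_top_of_isClosed_of_mem_line {K : AddSubgroup (ℝ × ℝ)}
    (hK : IsClosed (K : Set (ℝ × ℝ))) {v : ℝ × ℝ} (hv : v.2 ≠ 0) (hline : ∀ s : ℝ, s • v ∈ K)
    {a b : ℝ} (ha : (a, 0) ∈ K) (hb : (0, b) ∈ K) (hirr : Irrational (v.1 / v.2 * b / a)) :
    K = ⊤ := by
  set T := K.comap (AddMonoidHom.inl ℝ ℝ)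
  have hT : T = ⊤ := by
    have hcont : Continuous (AddMonoidHom.inl ℝ ℝ) := continuous_id.prodMk continuous_const
    refine T.eq_top_of_isClosed_of_irrational_div (hK.preimage hcont) ?_ ha hirr
    have hslide : (v.1 / v.2 * b, (0 : ℝ)) = (b / v.2) • v - (0, b) := by
      ext <;> simp [field]
    simpa [T, hslide] using K.sub_mem (hline (b / v.2)) hb
  refine eq_top_iff.mpr fun u _ => ?_
  have hu : u = (u.2 / v.2) • v + (u.1 - v.1 / v.2 * u.2, 0) := by
    ext <;> simp [field]
  have hT' : u.1 - v.1 / v.2 * u.2 ∈ T := hT ▸ AddSubgroup.mem_top _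
  rw [hu]
  exact K.add_mem (hline _) hT'

lemma isClosed_of_subset_zmultiples {S : Set ℝ} {c : ℝ} (h : S ⊆ AddSubgroup.zmultiples c) :
    IsClosed S :=
  isClosed_of_subset_discrete_closed h (SetLike.isDiscrete_iff_discreteTopology.mpr inferInstance)
    AddSubgroup.isClosed_of_discrete

lemma range_intCombination_subset_zmultiples (r₁ r₂ r₃ : ℚ) :
    range (fun k : ℤ × ℤ × ℤ => (k.1 * r₁ + k.2.1 * r₂ + k.2.2 * r₃ : ℝ)) ⊆
      AddSubgroup.zmultiples ((r₁.den * r₂.den * r₃.den : ℝ)⁻¹) := by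
  rintro _ ⟨⟨k₁, k₂, k₃⟩, rfl⟩
  refine ⟨k₁ * r₁.num * r₂.den * r₃.den + k₂ * r₁.den * r₂.num * r₃.den
    + k₃ * r₁.den * r₂.den * r₃.num, ?_⟩
  simp only [zsmul_eq_mul, Rat.cast_def]
  push_cast
  field_simp

section TwistTorus

variable {w₁ w₂ w₃ : ℝ}

def torusMk (w₁ w₂ w₃ : ℝ) : ℝ × ℝ × ℝ →+ AddCircle w₁ × AddCircle w₂ × AddCircle w₃ :=
  (QuotientAddGroup.mk' _).prodMap ((QuotientAddGroup.mk' _).prodMap (QuotientAddGroup.mk' _))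

def torusLine (w₁ w₂ w₃ h₁ h₂ h₃ : ℝ) : ℝ →+ AddCircle w₁ × AddCircle w₂ × AddCircle w₃ :=
  (torusMk w₁ w₂ w₃).comp ((smulAddHom ℝ _).flip (h₁, h₂, h₃))

lemma isOpenQuotientMap_torusMk : IsOpenQuotientMap (torusMk w₁ w₂ w₃) :=
  QuotientAddGroup.isOpenQuotientMap_mk.prodMap
    (QuotientAddGroup.isOpenQuotientMap_mk.prodMap QuotientAddGroup.isOpenQuotientMap_mk)

lemma torusMk_eq_zero_iff {x : ℝ × ℝ × ℝ} :
    torusMk w₁ w₂ w₃ x = 0 ↔ ∃ k₁ k₂ k₃ : ℤ, x = (k₁ * w₁, k₂ * w₂, k₃ * w₃) := by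
  obtain ⟨x₁, x₂, x₃⟩ := x
  change ((x₁ : AddCircle w₁), (x₂ : AddCircle w₂), (x₃ : AddCircle w₃)) = 0 ↔ _
  simp only [Prod.mk_eq_zero, AddCircle.coe_eq_zero_iff, zsmul_eq_mul, Prod.mk.injEq,
    eq_comm (a := x₁), eq_comm (a := x₂), eq_comm (a := x₃)]
  constructor
  · rintro ⟨⟨k₁, e₁⟩, ⟨k₂, e₂⟩, ⟨k₃, e₃⟩⟩
    exact ⟨k₁, k₂, k₃, e₁, e₂, e₃⟩
  · rintro ⟨k₁, k₂, k₃, e₁, e₂, e₃⟩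
    exact ⟨⟨k₁, e₁⟩, ⟨k₂, e₂⟩, ⟨k₃, e₃⟩⟩

lemma preimage_image_torusMk_plane (hw₁ : w₁ ≠ 0) (hw₂ : w₂ ≠ 0) (hw₃ : w₃ ≠ 0) (r₁ r₂ r₃ : ℚ) :
    torusMk w₁ w₂ w₃ ⁻¹' (torusMk w₁ w₂ w₃ ''
        {x | (r₁ : ℝ) * x.1 / w₁ + (r₂ : ℝ) * x.2.1 / w₂ + (r₃ : ℝ) * x.2.2 / w₃ = 0}) =
      (fun x : ℝ × ℝ × ℝ => (r₁ : ℝ) * x.1 / w₁ + (r₂ : ℝ) * x.2.1 / w₂ + (r₃ : ℝ) * x.2.2 / w₃) ⁻¹'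
        range (fun k : ℤ × ℤ × ℤ => (k.1 * r₁ + k.2.1 * r₂ + k.2.2 * r₃ : ℝ)) := by
  ext y
  constructor
  · rintro ⟨x, hx, hxy⟩
    obtain ⟨k₁, k₂, k₃, hk⟩ := torusMk_eq_zero_iff.mp (by rw [map_sub, hxy, sub_self] :
      torusMk w₁ w₂ w₃ (y - x) = 0)
    obtain rfl : y = x + (k₁ * w₁, k₂ * w₂, k₃ * w₃) := by rw [← hk, add_sub_cancel]
    refine ⟨(k₁, k₂, k₃), ?_⟩
    simp only [mem_ofPred_eq] at hx
    simp only [Prod.fst_add, Prod.snd_add]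
    rw [eq_comm, ← sub_eq_zero, ← hx]
    field_simp
    ring
  · rintro ⟨⟨k₁, k₂, k₃⟩, hk⟩
    refine ⟨y - (k₁ * w₁, k₂ * w₂, k₃ * w₃), ?_, ?_⟩
    · simp only [mem_ofPred_eq, Prod.fst_sub, Prod.snd_sub]
      simp only at hk
      field_simp at hk ⊢
      linear_combination -hk
    · rw [map_sub, torusMk_eq_zero_iff.mpr ⟨k₁, k₂, k₃, rfl⟩, sub_zero]

lemma isClosed_image_torusMk_plane (hw₁ : w₁ ≠ 0) (hw₂ : w₂ ≠ 0) (hw₃ : w₃ ≠ 0) (r₁ r₂ r₃ : ℚ) :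
    IsClosed (torusMk w₁ w₂ w₃ ''
      {x | (r₁ : ℝ) * x.1 / w₁ + (r₂ : ℝ) * x.2.1 / w₂ + (r₃ : ℝ) * x.2.2 / w₃ = 0}) := by
  rw [← isOpenQuotientMap_torusMk.isQuotientMap.isClosed_preimage,
    preimage_image_torusMk_plane hw₁ hw₂ hw₃]
  exact (isClosed_of_subset_zmultiples (range_intCombination_subset_zmultiples r₁ r₂ r₃)).preimage
    (by fun_prop)

variable {h₁ h₂ h₃ : ℝ} {r₁ r₂ r₃ : ℚ}

lemma range_torusLine_subset_image_plane
    (hrel : (r₁ : ℝ) * h₁ / w₁ + (r₂ : ℝ) * h₂ / w₂ + (r₃ : ℝ) * h₃ / w₃ = 0) :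
    range (torusLine w₁ w₂ w₃ h₁ h₂ h₃) ⊆ torusMk w₁ w₂ w₃ ''
      {x | (r₁ : ℝ) * x.1 / w₁ + (r₂ : ℝ) * x.2.1 / w₂ + (r₃ : ℝ) * x.2.2 / w₃ = 0} := by
  rintro _ ⟨s, rfl⟩
  refine ⟨(s * h₁, s * h₂, s * h₃), ?_, rfl⟩
  change (r₁ : ℝ) * (s * h₁) / w₁ + (r₂ : ℝ) * (s * h₂) / w₂ + (r₃ : ℝ) * (s * h₃) / w₃ = 0
  linear_combination s * hrel

lemma torusMk_mem_closure_rotate {x₁ x₂ x₃ : ℝ}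
    (h : torusMk w₂ w₃ w₁ (x₂, x₃, x₁) ∈ closure (range (torusLine w₂ w₃ w₁ h₂ h₃ h₁))) :
    torusMk w₁ w₂ w₃ (x₁, x₂, x₃) ∈ closure (range (torusLine w₁ w₂ w₃ h₁ h₂ h₃)) :=
  map_mem_closure (f := fun y => (y.2.2, y.1, y.2.1)) (by fun_prop) h
    (by rintro _ ⟨s, rfl⟩; exact ⟨s, rfl⟩)

lemma irrational_div_of_forall_rel (hw₂ : w₂ ≠ 0) (hw₃ : w₃ ≠ 0) (hh₃ : h₃ ≠ 0) (hr₁ : r₁ ≠ 0)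
    (huniq : ∀ q₁ q₂ q₃ : ℚ,
      (q₁ : ℝ) * h₁ / w₁ + (q₂ : ℝ) * h₂ / w₂ + (q₃ : ℝ) * h₃ / w₃ = 0 →
      ∃ c : ℚ, q₁ = c * r₁ ∧ q₂ = c * r₂ ∧ q₃ = c * r₃) :
    Irrational (h₂ / w₂ / (h₃ / w₃)) := by
  rintro ⟨t, ht⟩
  obtain ⟨c, hc₁, hc₂, -⟩ := huniq 0 1 (-t) (by push_cast; rw [ht]; field_simp; ring)
  obtain rfl : c = 0 := by simpa [hr₁] using hc₁.symm
  simp at hc₂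

noncomputable def planeGraph (w₁ w₂ w₃ : ℝ) (α β : ℚ) : ℝ × ℝ →+ ℝ × ℝ × ℝ :=
  AddMonoidHom.mk' (fun v => (-(w₁ * (α * v.1 / w₂ + β * v.2 / w₃)), v.1, v.2))
    (by intro u v; ext <;> simp; ring)

lemma continuous_planeGraph (α β : ℚ) : Continuous (planeGraph w₁ w₂ w₃ α β) := by
  change Continuous fun v : ℝ × ℝ => (-(w₁ * (α * v.1 / w₂ + β * v.2 / w₃)), v.1, v.2)
  fun_prop

lemma planeGraph_eq (hw₁ : w₁ ≠ 0) (hw₂ : w₂ ≠ 0) (hw₃ : w₃ ≠ 0) (hr₁ : r₁ ≠ 0) {y₁ y₂ y₃ : ℝ}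
    (hy : (r₁ : ℝ) * y₁ / w₁ + (r₂ : ℝ) * y₂ / w₂ + (r₃ : ℝ) * y₃ / w₃ = 0) :
    planeGraph w₁ w₂ w₃ (r₂ / r₁) (r₃ / r₁) (y₂, y₃) = (y₁, y₂, y₃) := by
  have hR : (r₁ : ℝ) ≠ 0 := by exact_mod_cast hr₁
  simp only [planeGraph, AddMonoidHom.mk'_apply, Prod.mk.injEq, and_true, Rat.cast_div]
  field_simp at hy ⊢
  linear_combination -hy

lemma torusMk_planeGraph_den_fst (hw₂ : w₂ ≠ 0) (α β : ℚ) :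
    torusMk w₁ w₂ w₃ (planeGraph w₁ w₂ w₃ α β (α.den * w₂, 0)) = 0 := by
  refine torusMk_eq_zero_iff.mpr ⟨-α.num, α.den, 0, ?_⟩
  simp [planeGraph, Rat.cast_def]
  field_simp

lemma torusMk_planeGraph_den_snd (hw₃ : w₃ ≠ 0) (α β : ℚ) :
    torusMk w₁ w₂ w₃ (planeGraph w₁ w₂ w₃ α β (0, β.den * w₃)) = 0 := by
  refine torusMk_eq_zero_iff.mpr ⟨-β.num, 0, β.den, ?_⟩
  simp [planeGraph, Rat.cast_def]
  field_simp

lemma torusMk_mem_closure_range_torusLine (hw₁ : w₁ ≠ 0) (hw₂ : w₂ ≠ 0) (hw₃ : w₃ ≠ 0)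
    (hh₃ : h₃ ≠ 0) (hr₁ : r₁ ≠ 0)
    (hrel : (r₁ : ℝ) * h₁ / w₁ + (r₂ : ℝ) * h₂ / w₂ + (r₃ : ℝ) * h₃ / w₃ = 0)
    (huniq : ∀ q₁ q₂ q₃ : ℚ,
      (q₁ : ℝ) * h₁ / w₁ + (q₂ : ℝ) * h₂ / w₂ + (q₃ : ℝ) * h₃ / w₃ = 0 →
      ∃ c : ℚ, q₁ = c * r₁ ∧ q₂ = c * r₂ ∧ q₃ = c * r₃)
    {x₁ x₂ x₃ : ℝ} (hx : (r₁ : ℝ) * x₁ / w₁ + (r₂ : ℝ) * x₂ / w₂ + (r₃ : ℝ) * x₃ / w₃ = 0) :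
    torusMk w₁ w₂ w₃ (x₁, x₂, x₃) ∈ closure (range (torusLine w₁ w₂ w₃ h₁ h₂ h₃)) := by
  let C := (torusLine w₁ w₂ w₃ h₁ h₂ h₃).range.topologicalClosure
  let K := C.comap ((torusMk w₁ w₂ w₃).comp (planeGraph w₁ w₂ w₃ (r₂ / r₁) (r₃ / r₁)))
  have hK : K = ⊤ := by
    refine AddSubgroup.eq_top_of_isClosed_of_mem_line (v := (h₂, h₃))
      (a := (r₂ / r₁).den * w₂) (b := (r₃ / r₁).den * w₃) ?_ hh₃ (fun s => ?_) ?_ ?_ ?_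
    · exact (AddSubgroup.isClosed_topologicalClosure _).preimage
        (isOpenQuotientMap_torusMk.continuous.comp (continuous_planeGraph _ _))
    · change torusMk w₁ w₂ w₃ (planeGraph w₁ w₂ w₃ _ _ (s * h₂, s * h₃)) ∈ C
      rw [planeGraph_eq (y₁ := s * h₁) hw₁ hw₂ hw₃ hr₁ (by linear_combination s * hrel)]
      exact AddSubgroup.le_topologicalClosure _ ⟨s, rfl⟩
    · change torusMk w₁ w₂ w₃ (planeGraph w₁ w₂ w₃ _ _ (_, 0)) ∈ C
      rw [torusMk_planeGraph_den_fst hw₂]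
      exact C.zero_mem
    · change torusMk w₁ w₂ w₃ (planeGraph w₁ w₂ w₃ _ _ (0, _)) ∈ C
      rw [torusMk_planeGraph_den_snd hw₃]
      exact C.zero_mem
    · convert (irrational_div_of_forall_rel hw₂ hw₃ hh₃ hr₁ huniq).ratCast_mul
        (q := (r₃ / r₁).den / (r₂ / r₁).den) (by positivity) using 1
      push_cast
      field_simp
  have hmem : (x₂, x₃) ∈ K := hK ▸ AddSubgroup.mem_top _
  rw [← AddMonoidHom.coe_range, ← AddSubgroup.topologicalClosure_coe]
  simpa only [K, C, SetLike.mem_coe, AddSubgroup.mem_comap, AddMonoidHom.coe_comp,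
    Function.comp_apply, planeGraph_eq hw₁ hw₂ hw₃ hr₁ hx] using hmem

end TwistTorus

theorem stmt_19 (w1 w2 w3 h1 h2 h3 : ℝ)
    (hw1 : 0 < w1) (hw2 : 0 < w2) (hw3 : 0 < w3)
    (hh1 : 0 < h1) (hh2 : 0 < h2) (hh3 : 0 < h3)
    (r1 r2 r3 : ℚ) (hr : (r1, r2, r3) ≠ (0, 0, 0))
    (hrel : (r1 : ℝ) * h1 / w1 + (r2 : ℝ) * h2 / w2 + (r3 : ℝ) * h3 / w3 = 0)
    (huniq : ∀ q1 q2 q3 : ℚ,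
      (q1 : ℝ) * h1 / w1 + (q2 : ℝ) * h2 / w2 + (q3 : ℝ) * h3 / w3 = 0 →
      ∃ c : ℚ, q1 = c * r1 ∧ q2 = c * r2 ∧ q3 = c * r3) :
    closure (Set.range (fun s : ℝ =>
        (((s * h1 : ℝ) : AddCircle w1), ((s * h2 : ℝ) : AddCircle w2),
          ((s * h3 : ℝ) : AddCircle w3))))
      = (fun x : ℝ × ℝ × ℝ =>
          ((x.1 : AddCircle w1), (x.2.1 : AddCircle w2), (x.2.2 : AddCircle w3))) ''
        {x : ℝ × ℝ × ℝ |
          (r1 : ℝ) * x.1 / w1 + (r2 : ℝ) * x.2.1 / w2 + (r3 : ℝ) * x.2.2 / w3 = 0} := by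
  change closure (range (torusLine w1 w2 w3 h1 h2 h3)) = torusMk w1 w2 w3 '' _
  refine (closure_minimal (range_torusLine_subset_image_plane hrel)
    (isClosed_image_torusMk_plane hw1.ne' hw2.ne' hw3.ne' r1 r2 r3)).antisymm ?_
  rintro _ ⟨⟨x1, x2, x3⟩, hx, rfl⟩
  replace hx : (r1 : ℝ) * x1 / w1 + (r2 : ℝ) * x2 / w2 + (r3 : ℝ) * x3 / w3 = 0 := hx
  obtain hr1 | hr2 | hr3 : r1 ≠ 0 ∨ r2 ≠ 0 ∨ r3 ≠ 0 := by
    contrapose! hr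
    simp [hr]
  · exact torusMk_mem_closure_range_torusLine hw1.ne' hw2.ne' hw3.ne' hh3.ne' hr1 hrel huniq hx
  · refine torusMk_mem_closure_rotate <| torusMk_mem_closure_range_torusLine hw2.ne' hw3.ne'
      hw1.ne' hh1.ne' (r₂ := r3) (r₃ := r1) hr2 (by linear_combination hrel)
      (fun q1 q2 q3 hq => ?_) (by linear_combination hx)
    obtain ⟨c, e1, e2, e3⟩ := huniq q3 q1 q2 (by linear_combination hq)
    exact ⟨c, e2, e3, e1⟩
  · refine torusMk_mem_closure_rotate <| torusMk_mem_closure_rotate <|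
      torusMk_mem_closure_range_torusLine hw3.ne' hw1.ne' hw2.ne' hh2.ne' (r₂ := r1) (r₃ := r2)
        hr3 (by linear_combination hrel) (fun q1 q2 q3 hq => ?_) (by linear_combination hx)
    obtain ⟨c, e1, e2, e3⟩ := huniq q2 q3 q1 (by linear_combination hq)
    exact ⟨c, e3, e1, e2⟩
end
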